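/- Let α_1,…,α_n be pairwise distinct elements of a finite field F_q and let k, r be integers with 6 ≤ 2k ≤ n and 1 ≤ r ≤ k−1. If every k×k submatrix of G_1 is nonsingular (i.e. the code C_1 generated by G_1 is an [n+1,k] MDS code), then C_1 is not monomially equivalent to any GRS code of length n+1 over F_q; that is, C_1 is a non-GRS MDS code. -/

import Mathlib

open Finset Matrix

/-- Elementary symmetric polynomial `σ_t` evaluated at the values `x 0, …, x (m-1)`. -/
def esymmV {F : Type*} [CommRing F] {m : ℕ} (t : ℕ) (x : Fin m → F) : F :=
  ∑ A ∈ Finset.univ.powersetCard t, ∏ i ∈ A, x i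

/-- Complete homogeneous symmetric polynomial `S_t` evaluated at `x 0, …, x (m-1)`. -/
def hsymmV {F : Type*} [CommRing F] {m : ℕ} (t : ℕ) (x : Fin m → F) : F :=
  ∑ d ∈ Finset.Nat.antidiagonalTuple m t, ∏ i, x i ^ d i

/-- The exponent of the `i`-th row (0-indexed): the elements of
`{0,…,k−r−1} ∪ {k−r+1,…,k}` in increasing order. -/
def expo (k r : ℕ) (i : Fin k) : ℕ := if (i : ℕ) < k - r then (i : ℕ) else (i : ℕ) + 1

/-- The Vandermonde product `∏_{i<j} (α_j − α_i)`. -/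
def vand {F : Type*} [CommRing F] {n : ℕ} (α : Fin n → F) : F :=
  ∏ i : Fin n, ∏ j ∈ Finset.Ioi i, (α j - α i)

/-- The matrix `G_{r,k}`: rows are `(α_1^e, …, α_n^e)` for
`e ∈ {0,…,k−r−1} ∪ {k−r+1,…,k}` in increasing order. -/
def Grk {F : Type*} [Field F] {n : ℕ} (α : Fin n → F) (k r : ℕ) : Matrix (Fin k) (Fin n) F :=
  Matrix.of fun i j => α j ^ expo k r i

/-- The matrix `G_1`: `G_{r,k}` with the extra column `(0,…,0,1)ᵀ` appended. -/
def G1 {F : Type*} [Field F] {n : ℕ} (α : Fin n → F) (k r : ℕ) :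
    Matrix (Fin k) (Fin (n + 1)) F :=
  Matrix.of fun i j =>
    if hj : (j : ℕ) < n then α ⟨j, hj⟩ ^ expo k r i
    else if (i : ℕ) = k - 1 then 1 else 0

/-- The matrix `G_2`: `G_1` with the extra column `(0,…,0,1,δ)ᵀ` appended
(entry `1` in row `k−1`, i.e. index `k−2`, and `δ` in row `k`, i.e. index `k−1`). -/
def G2 {F : Type*} [Field F] {n : ℕ} (α : Fin n → F) (k r : ℕ) (δ : F) :
    Matrix (Fin k) (Fin (n + 2)) F :=
  Matrix.of fun i j =>
    if hj : (j : ℕ) < n then α ⟨j, hj⟩ ^ expo k r i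
    else if (j : ℕ) = n then (if (i : ℕ) = k - 1 then 1 else 0)
    else (if (i : ℕ) = k - 2 then 1 else if (i : ℕ) = k - 1 then δ else 0)

/-- `u_i = ∏_{j ≠ i} (α_i − α_j)⁻¹`. -/
def uCoef {F : Type*} [Field F] {n : ℕ} (α : Fin n → F) (i : Fin n) : F :=
  ∏ j ∈ Finset.univ.erase i, (α i - α j)⁻¹

/-- `Λ_{r,i} = ∑_{j=0}^{r} (−1)^j σ_j α_i^{(n−k)+(r−1)−j}`. -/
def Lam {F : Type*} [Field F] {n : ℕ} (α : Fin n → F) (k r : ℕ) (i : Fin n) : F :=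
  ∑ j ∈ Finset.range (r + 1), (-1 : F) ^ j * esymmV j α * α i ^ ((n - k) + (r - 1) - j)

/-- Every `k×k` submatrix of `G` is nonsingular. -/
def allSubNonsing {F : Type*} [Field F] {k m : ℕ} (G : Matrix (Fin k) (Fin m) F) : Prop :=
  ∀ c : Fin k → Fin m, Function.Injective c → (G.submatrix id c).det ≠ 0

/-- The linear code spanned by the rows of `G`. -/
def rowSpan {F : Type*} [Field F] {k m : ℕ} (G : Matrix (Fin k) (Fin m) F) :
    Submodule F (Fin m → F) :=
  Submodule.span F (Set.range fun i => G i)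

/-- The dual code `C^⊥ = {x : ∑ x_i c_i = 0 for all c ∈ C}`, as a set. -/
def dualSet {F : Type*} [Field F] {m : ℕ} (C : Set (Fin m → F)) : Set (Fin m → F) :=
  {x | ∀ c ∈ C, ∑ i, x i * c i = 0}

/-- The extended code of `C` with respect to `w`. -/
def extCode {F : Type*} [Field F] {m : ℕ} (C : Set (Fin m → F)) (w : Fin m → F) :
    Set (Fin (m + 1) → F) :=
  {y | ∃ c ∈ C, (∀ i : Fin m, y (Fin.castSucc i) = c i) ∧ y (Fin.last m) = ∑ i, w i * c i}

/-- `C` is a GRS code of length `m` and dimension `kk` over `F`: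
evaluation points are pairwise distinct elements of `F ∪ {∞}` (with `∞ = none`),
the multipliers `v i` are nonzero, and `f(∞)` is the coefficient of `x^(kk−1)`. -/
def isGRS {F : Type*} [Field F] (m kk : ℕ) (C : Set (Fin m → F)) : Prop :=
  ∃ (β : Fin m → Option F) (v : Fin m → F),
    Function.Injective β ∧ (∀ i, v i ≠ 0) ∧
    C = {c | ∃ f : Polynomial F, f.degree < (kk : WithBot ℕ) ∧
      ∀ i, c i = v i * (match β i with
        | some x => Polynomial.eval x f
        | none => f.coeff (kk - 1))}

/-- Monomial equivalence of codes. -/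
def monEquiv {F : Type*} [Field F] {m : ℕ} (C C' : Set (Fin m → F)) : Prop :=
  ∃ (π : Equiv.Perm (Fin m)) (lam : Fin m → F),
    (∀ i, lam i ≠ 0) ∧ C' = {y | ∃ c ∈ C, ∀ i, y i = lam i * c (π i)}

open Polynomial Module

/-! The Schur square `C * C` (the span of coordinatewise products) of a `k`-dimensional GRS
code lies in a GRS code of dimension `2k - 1`, because products of polynomials of degree `< k`
have degree `< 2k - 1`, and monomially equivalent codes have Schur squares of the same dimension.
The Schur square of `C_1`, however, has dimension at least `2k`: it contains the vectors
`(α^s, 0)` for `2k - 1` exponents `s < 2k ≤ n`, independent by Vandermonde, and the square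
`(α^{2k}, 1)` of the last row, the only product of two rows with a nonzero last coordinate. -/

section

variable {F : Type*} [Field F]

lemma linearIndependent_pow_of_injective {ι : Type*} {n : ℕ} {α : Fin n → F}
    (hα : Function.Injective α) {E : ι → ℕ} (hE : Function.Injective E) (hlt : ∀ t, E t < n) :
    LinearIndependent F (fun t j => α j ^ E t) := by
  let evalAll : F[X] →ₗ[F] Fin n → F := LinearMap.pi fun j => leval (α j)
  have hX : LinearIndependent F (fun t => (X : F[X]) ^ E t) := by
    simpa only [coe_basisMonomials, monomial_one_right_eq_X_pow, Function.comp_def] using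
      (basisMonomials F).linearIndependent.comp E hE
  have hspan : Submodule.span F (Set.range fun t => (X : F[X]) ^ E t) ≤ degreeLT F n :=
    Submodule.span_le.2 <| Set.range_subset_iff.2 fun t =>
      mem_degreeLT.2 <| by simpa using WithBot.coe_lt_coe.2 (hlt t)
  have hdisj : Disjoint (Submodule.span F (Set.range fun t => (X : F[X]) ^ E t))
      (LinearMap.ker evalAll) := by
    refine Submodule.disjoint_def.2 fun p hp hker => ?_
    refine eq_zero_of_degree_lt_of_eval_index_eq_zero univ hα.injOn ?_ fun j _ => ?_
    · simpa using mem_degreeLT.1 (hspan hp)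
    · simpa [evalAll] using congrFun (LinearMap.mem_ker.1 hker) j
  have hcomp : (fun t j => α j ^ E t) = evalAll ∘ fun t => (X : F[X]) ^ E t := by
    ext t j
    simp [evalAll]
  exact hcomp ▸ hX.map hdisj

section G1

variable {n : ℕ} {α : Fin n → F} {k r : ℕ}

lemma expo_injective : Function.Injective (expo k r) := by
  intro i j h
  simp only [expo] at h
  ext
  split_ifs at h <;> omega

lemma expo_le (i : Fin k) : expo k r i ≤ k := by
  have := i.isLt
  unfold expo
  split_ifs <;> omega

lemma exists_expo_eq {e : ℕ} (he : e ≤ k) (hne : e ≠ k - r) : ∃ i : Fin k, expo k r i = e := by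
  refine ⟨⟨if e < k - r then e else e - 1, by split_ifs <;> omega⟩, ?_⟩
  simp only [expo]
  split_ifs <;> omega

@[simp] lemma G1_castSucc (i : Fin k) (j : Fin n) :
    G1 α k r i (Fin.castSucc j) = α j ^ expo k r i := by
  simp [G1]

@[simp] lemma G1_last (i : Fin k) :
    G1 α k r i (Fin.last n) = if (i : ℕ) = k - 1 then 1 else 0 := by
  simp [G1]

lemma linearIndependent_G1 (hα : Function.Injective α) (hkn : k < n) :
    LinearIndependent F (fun i => G1 α k r i) := by
  refine LinearIndependent.of_comp (LinearMap.funLeft F F Fin.castSucc) ?_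
  have hrows : (LinearMap.funLeft F F Fin.castSucc) ∘ (fun i => G1 α k r i) =
      fun i j => α j ^ expo k r i := by
    ext i j
    simp [LinearMap.funLeft]
  exact hrows ▸ linearIndependent_pow_of_injective hα expo_injective
    fun i => (expo_le i).trans_lt hkn

lemma finrank_rowSpan_G1 (hα : Function.Injective α) (hkn : k < n) :
    finrank F (rowSpan (G1 α k r)) = k := by
  rw [rowSpan, finrank_span_eq_card (linearIndependent_G1 hα hkn), Fintype.card_fin]

/-- Every `s < 2k` is a sum of two row exponents of `G_1`, except `1` when `k - r = 1` and `2k - 1`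
when `r = 1`; for `k ≥ 3` at most one of these cases occurs. -/
def schurExponents (k r : ℕ) : Finset ℕ :=
  (range (2 * k)).erase (if k - r = 1 then 1 else 2 * k - 1)

lemma card_schurExponents (hk : 1 ≤ k) : #(schurExponents k r) = 2 * k - 1 := by
  rw [schurExponents, card_erase_of_mem (by simp only [mem_range]; split_ifs <;> omega),
    card_range]

lemma exists_expo_add_eq (hk : 3 ≤ k) (hr1 : 1 ≤ r) (hrk : r ≤ k - 1) {s : ℕ}
    (hs : s ∈ schurExponents k r) : ∃ i j : Fin k, expo k r i + expo k r j = s := by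
  obtain ⟨a, b, ha, hak, hb, hbk, rfl⟩ :
      ∃ a b, a ≤ k ∧ a ≠ k - r ∧ b ≤ k ∧ b ≠ k - r ∧ a + b = s := by
    simp only [schurExponents, mem_erase, mem_range] at hs
    split_ifs at hs
    all_goals
      by_cases hsk : s ≤ k
      · by_cases hskr : s = k - r
        · exact ⟨k - r - 1, 1, by omega, by omega, by omega, by omega, by omega⟩
        · exact ⟨s, 0, by omega, hskr, by omega, by omega, by omega⟩
      · by_cases hskr : s - k = k - r
        · exact ⟨k - 1, k - r + 1, by omega, by omega, by omega, by omega, by omega⟩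
        · exact ⟨k, s - k, by omega, by omega, by omega, hskr, by omega⟩
  obtain ⟨i, rfl⟩ := exists_expo_eq ha hak
  obtain ⟨j, rfl⟩ := exists_expo_eq hb hbk
  exact ⟨i, j, rfl⟩

lemma G1_mul_G1_last_eq_zero (hr1 : 1 ≤ r) {i j : Fin k} (h : expo k r i + expo k r j < 2 * k) :
    (G1 α k r i * G1 α k r j) (Fin.last n) = 0 := by
  have hexpo : ∀ i : Fin k, (i : ℕ) = k - 1 → expo k r i = k := by
    intro i hi
    simp only [expo]
    split_ifs <;> omega
  simp only [Pi.mul_apply, G1_last]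
  split_ifs with hi hj
  · rw [hexpo i hi, hexpo j hj] at h
    omega
  all_goals simp

lemma two_mul_le_finrank_mul_self_rowSpan_G1 (hα : Function.Injective α) (hk : 3 ≤ k)
    (hkn : 2 * k ≤ n) (hr1 : 1 ≤ r) (hrk : r ≤ k - 1) :
    2 * k ≤ finrank F (rowSpan (G1 α k r) * rowSpan (G1 α k r)) := by
  set C := rowSpan (G1 α k r)
  have hrow : ∀ i, G1 α k r i ∈ C := fun i => Submodule.subset_span ⟨i, rfl⟩
  choose a b hab using fun s : schurExponents k r => exists_expo_add_eq hk hr1 hrk s.2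
  let v : schurExponents k r → Fin (n + 1) → F := fun s => G1 α k r (a s) * G1 α k r (b s)
  let top : Fin k := ⟨k - 1, by omega⟩
  let w : Option (schurExponents k r) → Fin (n + 1) → F :=
    fun o => Option.casesOn' o (G1 α k r top * G1 α k r top) v
  have hv_last : ∀ s, v s (Fin.last n) = 0 := fun s =>
    G1_mul_G1_last_eq_zero hr1 <| (hab s).trans_lt (mem_range.1 (mem_of_mem_erase s.2))
  have hv : LinearIndependent F v := by
    refine LinearIndependent.of_comp (LinearMap.funLeft F F Fin.castSucc) ?_
    have hinit : (LinearMap.funLeft F F Fin.castSucc) ∘ v =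
        fun (s : schurExponents k r) j => α j ^ (s : ℕ) := by
      ext s j
      simp [v, LinearMap.funLeft, ← pow_add, hab]
    exact hinit ▸ linearIndependent_pow_of_injective hα Subtype.val_injective
      fun s => (mem_range.1 (mem_of_mem_erase s.2)).trans_le hkn
  have htop : G1 α k r top * G1 α k r top ∉ Submodule.span F (Set.range v) := by
    intro hmem
    have hker : Submodule.span F (Set.range v) ≤ LinearMap.ker (LinearMap.proj (Fin.last n)) :=
      Submodule.span_le.2 <| Set.range_subset_iff.2 hv_last
    simpa [top] using hker hmem
  have hw : LinearIndependent F w := hv.option htop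
  have hwC : Submodule.span F (Set.range w) ≤ C * C := by
    refine Submodule.span_le.2 <| Set.range_subset_iff.2 fun o => ?_
    cases o with
    | none => exact Submodule.mul_mem_mul (hrow top) (hrow top)
    | some s => exact Submodule.mul_mem_mul (hrow (a s)) (hrow (b s))
  calc 2 * k = Fintype.card (Option (schurExponents k r)) := by
        rw [Fintype.card_option, Fintype.card_coe, card_schurExponents (by omega)]
        omega
    _ = finrank F (Submodule.span F (Set.range w)) := (finrank_span_eq_card hw).symm
    _ ≤ finrank F (C * C) := Submodule.finrank_mono hwC

end G1

section GRS

variable {m : ℕ}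

noncomputable def extEval (kk : ℕ) : Option F → F[X] →ₗ[F] F
  | some x => leval x
  | none => lcoeff F (kk - 1)

noncomputable def grsMap (kk : ℕ) (β : Fin m → Option F) (v : Fin m → F) : F[X] →ₗ[F] Fin m → F :=
  LinearMap.pi fun i => v i • extEval kk (β i)

noncomputable def grsCode (kk : ℕ) (β : Fin m → Option F) (v : Fin m → F) :
    Submodule F (Fin m → F) :=
  (degreeLT F kk).map (grsMap kk β v)

@[simp] lemma extEval_some (kk : ℕ) (x : F) (f : F[X]) : extEval kk (some x) f = f.eval x := rfl

@[simp] lemma extEval_none (kk : ℕ) (f : F[X]) : extEval kk none f = f.coeff (kk - 1) := rfl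

@[simp] lemma grsMap_apply (kk : ℕ) (β : Fin m → Option F) (v : Fin m → F) (f : F[X]) (i : Fin m) :
    grsMap kk β v f i = v i * extEval kk (β i) f := rfl

lemma isGRS.exists_eq_grsCode {kk : ℕ} {C : Set (Fin m → F)} (h : isGRS m kk C) :
    ∃ (β : Fin m → Option F) (v : Fin m → F), Function.Injective β ∧ (∀ i, v i ≠ 0) ∧
      C = grsCode kk β v := by
  obtain ⟨β, v, hβ, hv, rfl⟩ := h
  refine ⟨β, v, hβ, hv, Set.ext fun c => ⟨?_, ?_⟩⟩
  · rintro ⟨f, hf, hc⟩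
    refine ⟨f, mem_degreeLT.2 hf, funext fun i => ?_⟩
    rw [hc i, grsMap_apply]
    cases β i <;> rfl
  · rintro ⟨f, hf, rfl⟩
    refine ⟨f, mem_degreeLT.1 hf, fun i => ?_⟩
    rw [grsMap_apply]
    cases β i <;> rfl

lemma eq_zero_of_extEval_eq_zero {kk : ℕ} {β : Fin m → Option F} (hβ : Function.Injective β)
    (hkk : kk ≤ m) {f : F[X]} (hf : f ∈ degreeLT F kk) (h : ∀ i, extEval kk (β i) f = 0) :
    f = 0 := by
  classical
  have hdeg := mem_degreeLT.1 hf
  set S := (univ.image β).eraseNone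
  refine eq_zero_of_degree_lt_of_eval_finset_eq_zero S ?_ fun x hx => ?_
  · by_cases hnone : none ∈ univ.image β
    · obtain ⟨i, -, hi⟩ := mem_image.1 hnone
      have hc : f.coeff (kk - 1) = 0 := by simpa [hi] using h i
      rw [card_eraseNone_of_mem hnone, card_image_of_injective _ hβ, card_univ, Fintype.card_fin]
      refine (degree_lt_iff_coeff_zero _ _).2 fun j hj => ?_
      rcases (show kk - 1 = j ∨ kk ≤ j by omega) with rfl | hj'
      · exact hc
      · exact coeff_eq_zero_of_degree_lt (hdeg.trans_le (by exact_mod_cast hj'))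
    · rw [card_eraseNone_of_not_mem hnone, card_image_of_injective _ hβ, card_univ,
        Fintype.card_fin]
      exact hdeg.trans_le (by exact_mod_cast hkk)
  · obtain ⟨i, -, hi⟩ := mem_image.1 (Finset.mem_eraseNone.1 hx)
    simpa [hi] using h i

lemma finrank_grsCode {kk : ℕ} {β : Fin m → Option F} {v : Fin m → F}
    (hβ : Function.Injective β) (hv : ∀ i, v i ≠ 0) (hkk : kk ≤ m) :
    finrank F (grsCode kk β v) = kk := by
  have hinj : Function.Injective (grsMap kk β v ∘ₗ (degreeLT F kk).subtype) := by
    refine (injective_iff_map_eq_zero _).2 fun f hf => Subtype.ext ?_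
    refine eq_zero_of_extEval_eq_zero hβ hkk f.2 fun i => ?_
    simpa [grsMap, hv i] using congrFun hf i
  rw [grsCode, ← Submodule.range_subtype (degreeLT F kk), ← LinearMap.range_comp,
    LinearMap.finrank_range_of_inj hinj, (degreeLTEquiv F kk).finrank_eq, finrank_fin_fun]

lemma mul_mem_degreeLT_succ {d : ℕ} {f g : F[X]} (hf : f ∈ degreeLT F (d + 1))
    (hg : g ∈ degreeLT F (d + 1)) : f * g ∈ degreeLT F (2 * d + 1) := by
  rw [degreeLT_succ_eq_degreeLE, mem_degreeLE] at hf hg ⊢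
  calc (f * g).degree ≤ f.degree + g.degree := degree_mul_le f g
    _ ≤ d + d := add_le_add hf hg
    _ = (2 * d : ℕ) := by push_cast; ring

lemma extEval_mul {d : ℕ} {f g : F[X]} (hf : f ∈ degreeLT F (d + 1))
    (hg : g ∈ degreeLT F (d + 1)) (b : Option F) :
    extEval (2 * d + 1) b (f * g) = extEval (d + 1) b f * extEval (d + 1) b g := by
  rw [degreeLT_succ_eq_degreeLE, mem_degreeLE, ← natDegree_le_iff_degree_le] at hf hg
  cases b with
  | none => simpa [two_mul] using coeff_mul_add_eq_of_natDegree_le hf hg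
  | some x => simp

lemma mul_self_grsCode_le (d : ℕ) (β : Fin m → Option F) (v : Fin m → F) :
    grsCode (d + 1) β v * grsCode (d + 1) β v ≤ grsCode (2 * d + 1) β (v * v) := by
  refine Submodule.mul_le.2 ?_
  rintro _ ⟨f, hf, rfl⟩ _ ⟨g, hg, rfl⟩
  refine ⟨f * g, mul_mem_degreeLT_succ hf hg, funext fun i => ?_⟩
  simp only [grsMap_apply, Pi.mul_apply, extEval_mul hf hg]
  ring

lemma finrank_mul_self_grsCode_le {kk : ℕ} (hkk : 1 ≤ kk) (β : Fin m → Option F)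
    (v : Fin m → F) : finrank F (grsCode kk β v * grsCode kk β v) ≤ 2 * kk - 1 := by
  obtain ⟨d, rfl⟩ := Nat.exists_eq_add_of_le' hkk
  calc finrank F (grsCode (d + 1) β v * grsCode (d + 1) β v)
      ≤ finrank F (grsCode (2 * d + 1) β (v * v)) :=
        Submodule.finrank_mono (mul_self_grsCode_le d β v)
    _ ≤ finrank F (degreeLT F (2 * d + 1)) := Submodule.finrank_map_le _ _
    _ = 2 * (d + 1) - 1 := by
        rw [(degreeLTEquiv F _).finrank_eq, finrank_fin_fun]; omega

end GRS

section Monomial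

variable {m : ℕ}

def monomialMap (lam : Fin m → F) (π : Equiv.Perm (Fin m)) : (Fin m → F) →ₗ[F] Fin m → F :=
  LinearMap.pi fun i => lam i • LinearMap.proj (π i)

@[simp] lemma monomialMap_apply (lam : Fin m → F) (π : Equiv.Perm (Fin m)) (c : Fin m → F)
    (i : Fin m) : monomialMap lam π c i = lam i * c (π i) := rfl

lemma monomialMap_injective {lam : Fin m → F} (hlam : ∀ i, lam i ≠ 0) (π : Equiv.Perm (Fin m)) :
    Function.Injective (monomialMap lam π) := by
  intro c c' h
  funext j
  simpa [hlam] using congrFun h (π.symm j)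

lemma monomialMap_mul (lam : Fin m → F) (π : Equiv.Perm (Fin m)) (c c' : Fin m → F) :
    monomialMap (lam * lam) π (c * c') = monomialMap lam π c * monomialMap lam π c' := by
  funext i
  simp only [monomialMap_apply, Pi.mul_apply]
  ring

lemma monEquiv.exists_eq_map {C : Submodule F (Fin m → F)} {C' : Set (Fin m → F)}
    (h : monEquiv (C : Set (Fin m → F)) C') :
    ∃ (lam : Fin m → F) (π : Equiv.Perm (Fin m)), (∀ i, lam i ≠ 0) ∧
      C' = C.map (monomialMap lam π) := by
  obtain ⟨π, lam, hlam, rfl⟩ := h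
  refine ⟨lam, π, hlam, Set.ext fun y => ⟨?_, ?_⟩⟩
  · rintro ⟨c, hc, hy⟩
    exact ⟨c, hc, funext fun i => (hy i).symm⟩
  · rintro ⟨c, hc, rfl⟩
    exact ⟨c, hc, fun i => rfl⟩

lemma finrank_map_monomialMap {lam : Fin m → F} (hlam : ∀ i, lam i ≠ 0) (π : Equiv.Perm (Fin m))
    (C : Submodule F (Fin m → F)) : finrank F (C.map (monomialMap lam π)) = finrank F C :=
  (Submodule.equivMapOfInjective _ (monomialMap_injective hlam π) C).finrank_eq.symm

lemma finrank_mul_self_le_map_monomialMap {lam : Fin m → F} (hlam : ∀ i, lam i ≠ 0)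
    (π : Equiv.Perm (Fin m)) (C : Submodule F (Fin m → F)) :
    finrank F (C * C) ≤
      finrank F (C.map (monomialMap lam π) * C.map (monomialMap lam π)) := by
  have hlam2 : ∀ i, (lam * lam) i ≠ 0 := fun i => mul_ne_zero (hlam i) (hlam i)
  rw [← finrank_map_monomialMap hlam2 π]
  refine Submodule.finrank_mono <| Submodule.map_le_iff_le_comap.2 <| Submodule.mul_le.2 ?_
  intro c hc c' hc'
  rw [Submodule.mem_comap, monomialMap_mul]
  exact Submodule.mul_mem_mul (Submodule.mem_map_of_mem hc) (Submodule.mem_map_of_mem hc')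

end Monomial

end

theorem C1_nonGRS_general {F : Type*} [Field F] {n : ℕ}
    (α : Fin n → F) (hα : Function.Injective α) (k r : ℕ)
    (h6 : 6 ≤ 2 * k) (hkn : 2 * k ≤ n) (hr1 : 1 ≤ r) (hrk : r ≤ k - 1) :
    ∀ (kk : ℕ), 2 ≤ kk → kk ≤ n + 1 → ∀ C' : Set (Fin (n + 1) → F),
      isGRS (n + 1) kk C' →
      ¬ monEquiv (rowSpan (G1 α k r) : Set (Fin (n + 1) → F)) C' := by
  intro kk _ hkkn C' hGRS hmon
  obtain ⟨β, v, hβ, hv, rfl⟩ := hGRS.exists_eq_grsCode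
  obtain ⟨lam, π, hlam, hC⟩ := hmon.exists_eq_map
  replace hC := SetLike.coe_injective hC
  have hkk : k = kk := by
    rw [← finrank_grsCode hβ hv hkkn, hC, finrank_map_monomialMap hlam,
      finrank_rowSpan_G1 hα (by omega)]
  have hlower := two_mul_le_finrank_mul_self_rowSpan_G1 hα (by omega) hkn hr1 hrk
  have hmap := finrank_mul_self_le_map_monomialMap hlam π (rowSpan (G1 α k r))
  have hupper := finrank_mul_self_grsCode_le (by omega : 1 ≤ kk) β v
  rw [← hC] at hmap
  omega

/-- Theorem 4.6: if the code `C_1` generated by `G_1` is MDS, then it is not monomially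
equivalent to any GRS code of length `n+1` over `F`. -/
theorem C1_nonGRS {F : Type*} [Field F] [Fintype F] {n : ℕ}
    (α : Fin n → F) (hα : Function.Injective α) (k r : ℕ)
    (h6 : 6 ≤ 2 * k) (hkn : 2 * k ≤ n) (hr1 : 1 ≤ r) (hrk : r ≤ k - 1)
    (hMDS : allSubNonsing (G1 α k r)) :
    ∀ (kk : ℕ), 2 ≤ kk → kk ≤ n + 1 → ∀ C' : Set (Fin (n + 1) → F),
      isGRS (n + 1) kk C' →
      ¬ monEquiv (rowSpan (G1 α k r) : Set (Fin (n + 1) → F)) C' :=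
  C1_nonGRS_general α hα k r h6 hkn hr1 hrk
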